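/- arXiv:2205.12959 — 2 statements merged into one kernel-verified Lean document; each statement's English description precedes it below -/
import Mathlib

section
/- Let F ∈ C¹(ℝ^d;ℝ) be (m,b)-dissipative and M-smooth. Then for every c ∈ (0,1) and x ∈ ℝ^d: F(cx) + (1/2)(1−c²)m‖x‖² + b log c ≤ F(x) ≤ F(0) + (1/2)‖∇F(0)‖² + ((M+1)/2)‖x‖². In particular, for r > 0: if F(x) ≥ r then ‖x‖² ≥ (2/(M+1))(r − F(0) − (1/2)‖∇F(0)‖²), and if F(x) ≤ r then ‖x‖² ≤ (4/m)(r + (1/2)b log 2 − inf_{w∈ℝ^d} F(w)). -/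
open MeasureTheory Real
open scoped RealInnerProductSpace NNReal

noncomputable section

/-- Euclidean space `ℝ^d`. -/
abbrev Ed (d : ℕ) := EuclideanSpace ℝ (Fin d)

/-- `(m,b)`-dissipativity: `⟨∇H x, x⟩ ≥ m‖x‖² - b`. -/
def IsDissipative {d : ℕ} (m b : ℝ) (H : Ed d → ℝ) : Prop :=
  ∀ x, m * ‖x‖ ^ 2 - b ≤ ⟪gradient H x, x⟫

/-- `M`-smoothness: the gradient is `M`-Lipschitz. -/
def IsGradSmooth {d : ℕ} (M : ℝ) (H : Ed d → ℝ) : Prop :=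
  ∀ x y, ‖gradient H x - gradient H y‖ ≤ M * ‖x - y‖

section AuxLemmas

variable {d : ℕ}

lemma inner_gradient_eq' (F : Ed d → ℝ) (y v : Ed d) :
    ⟪gradient F y, v⟫ = fderiv ℝ F y v := by
  simp [gradient, InnerProductSpace.toDual_symm_apply]

lemma line_hasDerivAt' (F : Ed d → ℝ) (hF : ContDiff ℝ 1 F) (x : Ed d) (t : ℝ) :
    HasDerivAt (fun s : ℝ => F (s • x)) (⟪gradient F (t • x), x⟫) t := by
  have h1 : HasDerivAt (fun s : ℝ => s • x) x t := by
    simpa using (hasDerivAt_id t).smul_const x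
  have h2 := ((hF.differentiable one_ne_zero) (t • x)).hasFDerivAt
  have h3 := h2.comp_hasDerivAt t h1
  rw [inner_gradient_eq']; exact h3

lemma cont_line' (F : Ed d → ℝ) (hF : ContDiff ℝ 1 F) (x : Ed d) :
    Continuous (fun t : ℝ => ⟪gradient F (t • x), x⟫) := by
  have hc : Continuous (fun y : Ed d => fderiv ℝ F y) := hF.continuous_fderiv one_ne_zero
  have : Continuous (fun t : ℝ => (fderiv ℝ F (t • x)) x) :=
    (ContinuousLinearMap.apply ℝ ℝ x).continuous.comp
      (hc.comp (continuous_id.smul continuous_const))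
  rw [show (fun t : ℝ => ⟪gradient F (t • x), x⟫) = fun t : ℝ => (fderiv ℝ F (t • x)) x from
    funext fun t => inner_gradient_eq' F _ x]; exact this

lemma ftc_line' (F : Ed d → ℝ) (hF : ContDiff ℝ 1 F) (x : Ed d) (a c : ℝ) :
    ∫ t in a..c, ⟪gradient F (t • x), x⟫ = F (c • x) - F (a • x) :=
  intervalIntegral.integral_eq_sub_of_hasDerivAt
    (fun t _ => line_hasDerivAt' F hF x t)
    ((cont_line' F hF x).intervalIntegrable a c)

lemma part1' (m b : ℝ) (F : Ed d → ℝ) (hF : ContDiff ℝ 1 F)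
    (hdis : ∀ y : Ed d, m * ‖y‖ ^ 2 - b ≤ ⟪gradient F y, y⟫)
    (c : ℝ) (hc0 : 0 < c) (hc1 : c < 1) (x : Ed d) :
    F (c • x) + (1 / 2) * (1 - c ^ 2) * m * ‖x‖ ^ 2 + b * Real.log c ≤ F x := by
  have hftc : ∫ t in c..1, ⟪gradient F (t • x), x⟫ = F x - F (c • x) := by
    simpa using ftc_line' F hF x c 1
  have hptwise : ∀ t ∈ Set.Icc c 1,
      m * ‖x‖ ^ 2 * t - b * t⁻¹ ≤ ⟪gradient F (t • x), x⟫ := by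
    intro t ht
    have ht0 : 0 < t := lt_of_lt_of_le hc0 ht.1
    have h1 := hdis (t • x)
    have h2 : ⟪gradient F (t • x), t • x⟫ = t * ⟪gradient F (t • x), x⟫ :=
      real_inner_smul_right _ _ _
    have h3 : ‖t • x‖ ^ 2 = t ^ 2 * ‖x‖ ^ 2 := by
      rw [norm_smul]; rw [Real.norm_eq_abs]; rw [mul_pow, sq_abs]
    rw [h2, h3] at h1
    have hinv : t⁻¹ * t = 1 := inv_mul_cancel₀ ht0.ne'
    have key : (m * ‖x‖ ^ 2 * t - b * t⁻¹) * t ≤ ⟪gradient F (t • x), x⟫ * t := by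
      have e : (m * ‖x‖ ^ 2 * t - b * t⁻¹) * t = m * (t ^ 2 * ‖x‖ ^ 2) - b := by
        field_simp
      rw [e]; linarith
    exact le_of_mul_le_mul_right key ht0
  have hint1 : IntervalIntegrable (fun t : ℝ => m * ‖x‖ ^ 2 * t - b * t⁻¹) volume c 1 := by
    apply ContinuousOn.intervalIntegrable
    apply ContinuousOn.sub
    · exact (continuous_const.mul continuous_id).continuousOn
    · apply ContinuousOn.mul continuousOn_const
      apply ContinuousOn.inv₀ continuousOn_id
      intro t ht
      rw [Set.uIcc_of_le hc1.le] at ht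
      exact ne_of_gt (lt_of_lt_of_le hc0 ht.1)
  have hmono := intervalIntegral.integral_mono_on hc1.le hint1
    ((cont_line' F hF x).intervalIntegrable c 1) hptwise
  have hnz : (0:ℝ) ∉ Set.uIcc c 1 := by
    rw [Set.uIcc_of_le hc1.le]; intro h; exact absurd h.1 (not_le.mpr hc0)
  have hcomp : ∫ t in c..1, (m * ‖x‖ ^ 2 * t - b * t⁻¹)
      = m * ‖x‖ ^ 2 * ((1 ^ 2 - c ^ 2) / 2) - b * Real.log (1 / c) := by
    have hi1 : IntervalIntegrable (fun t : ℝ => m * ‖x‖ ^ 2 * t) volume c 1 :=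
      (Continuous.intervalIntegrable (by fun_prop) c 1)
    have hi2 : IntervalIntegrable (fun t : ℝ => b * t⁻¹) volume c 1 := by
      apply ContinuousOn.intervalIntegrable
      apply ContinuousOn.mul continuousOn_const
      apply ContinuousOn.inv₀ continuousOn_id
      intro t ht
      rw [Set.uIcc_of_le hc1.le] at ht
      exact ne_of_gt (lt_of_lt_of_le hc0 ht.1)
    rw [intervalIntegral.integral_sub hi1 hi2]
    rw [intervalIntegral.integral_const_mul, intervalIntegral.integral_const_mul,
      integral_id, integral_inv hnz]
  rw [hcomp, hftc, one_div, Real.log_inv, one_pow] at hmono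
  linarith

lemma part2' (M : ℝ) (F : Ed d → ℝ) (hF : ContDiff ℝ 1 F)
    (hsm : ∀ x y : Ed d, ‖gradient F x - gradient F y‖ ≤ M * ‖x - y‖) (x : Ed d) :
    F x ≤ F 0 + (1 / 2) * ‖gradient F 0‖ ^ 2 + ((M + 1) / 2) * ‖x‖ ^ 2 := by
  have hftc : ∫ t in (0:ℝ)..1, ⟪gradient F (t • x), x⟫ = F x - F 0 := by
    simpa using ftc_line' F hF x 0 1
  have hptwise : ∀ t ∈ Set.Icc (0:ℝ) 1,
      ⟪gradient F (t • x), x⟫ ≤ ‖gradient F 0‖ * ‖x‖ + M * ‖x‖ ^ 2 * t := by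
    intro t ht
    have h1 : ⟪gradient F (t • x), x⟫
        = ⟪gradient F 0, x⟫ + ⟪gradient F (t • x) - gradient F 0, x⟫ := by
      rw [inner_sub_left]; ring
    have h2 : ⟪gradient F 0, x⟫ ≤ ‖gradient F 0‖ * ‖x‖ := real_inner_le_norm _ _
    have h3 : ⟪gradient F (t • x) - gradient F 0, x⟫
        ≤ ‖gradient F (t • x) - gradient F 0‖ * ‖x‖ := real_inner_le_norm _ _
    have h4 : ‖gradient F (t • x) - gradient F 0‖ ≤ M * ‖t • x‖ := by
      simpa using hsm (t • x) 0
    have h5 : ‖t • x‖ = t * ‖x‖ := by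
      rw [norm_smul, Real.norm_eq_abs, abs_of_nonneg ht.1]
    have h6 : ‖gradient F (t • x) - gradient F 0‖ * ‖x‖ ≤ M * (t * ‖x‖) * ‖x‖ := by
      apply mul_le_mul_of_nonneg_right _ (norm_nonneg x)
      rw [← h5]; exact h4
    rw [h1]
    have : M * (t * ‖x‖) * ‖x‖ = M * ‖x‖ ^ 2 * t := by ring
    linarith [this ▸ h6]
  have hmono := intervalIntegral.integral_mono_on (by norm_num : (0:ℝ) ≤ 1)
    ((cont_line' F hF x).intervalIntegrable 0 1)
    ((Continuous.intervalIntegrable (by fun_prop) 0 1 :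
      IntervalIntegrable (fun t : ℝ => ‖gradient F 0‖ * ‖x‖ + M * ‖x‖ ^ 2 * t) volume 0 1))
    hptwise
  have hcomp : ∫ t in (0:ℝ)..1, (‖gradient F 0‖ * ‖x‖ + M * ‖x‖ ^ 2 * t)
      = ‖gradient F 0‖ * ‖x‖ + M * ‖x‖ ^ 2 * ((1 ^ 2 - 0 ^ 2) / 2) := by
    rw [intervalIntegral.integral_add (Continuous.intervalIntegrable (by fun_prop) 0 1)
      (Continuous.intervalIntegrable (by fun_prop) 0 1),
      intervalIntegral.integral_const, intervalIntegral.integral_const_mul, integral_id]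
    simp
  rw [hcomp, hftc] at hmono
  nlinarith [sq_nonneg (‖gradient F 0‖ - ‖x‖), hmono]

end AuxLemmas

/-- **Bounds for dissipative and smooth functions** (Lemma on lower/upper bounds).  -/
theorem dissipative_function_bounds
    (d : ℕ) (m b M : ℝ) (hm : 0 < m) (hb : 0 < b) (hM : 0 < M)
    (F : Ed d → ℝ) (hF : ContDiff ℝ 1 F)
    (hdis : IsDissipative m b F) (hsm : IsGradSmooth M F) :
    (∀ c : ℝ, 0 < c → c < 1 → ∀ x : Ed d,
        F (c • x) + (1 / 2) * (1 - c ^ 2) * m * ‖x‖ ^ 2 + b * Real.log c ≤ F x) ∧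
    (∀ x : Ed d,
        F x ≤ F 0 + (1 / 2) * ‖gradient F 0‖ ^ 2 + ((M + 1) / 2) * ‖x‖ ^ 2) ∧
    (∀ r : ℝ, 0 < r → ∀ x : Ed d, r ≤ F x →
        (2 / (M + 1)) * (r - F 0 - (1 / 2) * ‖gradient F 0‖ ^ 2) ≤ ‖x‖ ^ 2) ∧
    (∀ r : ℝ, 0 < r → ∀ x : Ed d, F x ≤ r →
        ‖x‖ ^ 2 ≤ (4 / m) * (r + (1 / 2) * b * Real.log 2 - ⨅ w : Ed d, F w)) := by
  have hp1 : ∀ c : ℝ, 0 < c → c < 1 → ∀ x : Ed d,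
      F (c • x) + (1 / 2) * (1 - c ^ 2) * m * ‖x‖ ^ 2 + b * Real.log c ≤ F x :=
    fun c hc0 hc1 x => part1' m b F hF hdis c hc0 hc1 x
  have hp2 : ∀ x : Ed d,
      F x ≤ F 0 + (1 / 2) * ‖gradient F 0‖ ^ 2 + ((M + 1) / 2) * ‖x‖ ^ 2 :=
    fun x => part2' M F hF hsm x
  refine ⟨hp1, hp2, ?_, ?_⟩
  · -- part 3
    intro r _ x hrx
    have h2 := hp2 x
    have hM1 : (0:ℝ) < M + 1 := by linarith
    rw [div_mul_eq_mul_div, div_le_iff₀ hM1]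
    nlinarith
  · -- part 4
    -- F is bounded below
    obtain ⟨x₀, hx₀mem, hx₀min⟩ := (isCompact_closedBall (0 : Ed d) 1).exists_isMinOn
      ⟨0, by simp⟩ hF.continuous.continuousOn
    have hlb : ∀ y : Ed d, F x₀ - b ^ 2 / (2 * m) - m / 2 ≤ F y := by
      intro y
      have hbm : (0:ℝ) ≤ b ^ 2 / (2 * m) := by positivity
      by_cases hy : ‖y‖ ≤ 1
      · have := hx₀min (show y ∈ Metric.closedBall (0 : Ed d) 1 by simpa [Metric.mem_closedBall, dist_zero_right] using hy)
        simp only [Set.mem_setOf_eq] at this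
        linarith
      · push_neg at hy
        have hy0 : (0:ℝ) < ‖y‖ := by linarith
        set c : ℝ := ‖y‖⁻¹ with hc
        have hc0 : 0 < c := inv_pos.mpr hy0
        have hc1 : c < 1 := inv_lt_one_of_one_lt₀ hy
        have hA := hp1 c hc0 hc1 y
        have hcy : ‖c • y‖ = 1 := by
          rw [norm_smul, Real.norm_eq_abs, abs_of_pos hc0, hc, inv_mul_cancel₀ hy0.ne']
        have hFx0 : F x₀ ≤ F (c • y) := hx₀min
          (show c • y ∈ Metric.closedBall (0 : Ed d) 1 by
            simp [Metric.mem_closedBall, dist_zero_right, hcy])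
        have hlogc : Real.log c = -Real.log ‖y‖ := Real.log_inv _
        have hlogy : Real.log ‖y‖ ≤ ‖y‖ - 1 := Real.log_le_sub_one_of_pos hy0
        have hinv : c ^ 2 * ‖y‖ ^ 2 = 1 := by
          rw [hc]; field_simp
        have hblog : -(b * ‖y‖) ≤ b * Real.log c := by
          rw [hlogc]
          nlinarith [hlogy, hb.le]
        have hexp : (1 / 2) * (1 - c ^ 2) * m * ‖y‖ ^ 2
            = (1 / 2) * m * ‖y‖ ^ 2 - m / 2 := by
          have : (1 - c ^ 2) * ‖y‖ ^ 2 = ‖y‖ ^ 2 - 1 := by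
            rw [sub_mul, one_mul, hinv]
          nlinarith [this]
        rw [hexp] at hA
        have key : F x₀ + (1 / 2) * m * ‖y‖ ^ 2 - m / 2 - b * ‖y‖ ≤ F y := by
          linarith
        have h2m : b ^ 2 / (2 * m) * (2 * m) = b ^ 2 := by field_simp
        nlinarith [sq_nonneg (m * ‖y‖ - b), hm, key, h2m]
    have hBdd : BddBelow (Set.range F) := by
      refine ⟨F x₀ - b ^ 2 / (2 * m) - m / 2, ?_⟩
      rintro _ ⟨y, rfl⟩
      exact hlb y
    have hinf : ∀ y : Ed d, (⨅ w : Ed d, F w) ≤ F y := fun y => ciInf_le hBdd y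
    intro r _ x hxr
    set c : ℝ := (Real.sqrt 2)⁻¹ with hc
    have hs2 : (1:ℝ) < Real.sqrt 2 := by
      rw [show (1:ℝ) = Real.sqrt 1 from Real.sqrt_one.symm]
      exact Real.sqrt_lt_sqrt (by norm_num) (by norm_num)
    have hc0 : 0 < c := inv_pos.mpr (by linarith)
    have hc1 : c < 1 := inv_lt_one_of_one_lt₀ hs2
    have hc2 : c ^ 2 = 1 / 2 := by
      rw [hc, inv_pow, Real.sq_sqrt (by norm_num : (0:ℝ) ≤ 2)]; norm_num
    have hlogc : Real.log c = -(Real.log 2 / 2) := by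
      rw [hc, Real.log_inv, Real.log_sqrt (by norm_num)]
    have h1 := hp1 c hc0 hc1 x
    rw [hc2, hlogc] at h1
    have hinfle := hinf (c • x)
    rw [div_mul_eq_mul_div, le_div_iff₀ hm]
    nlinarith [h1, hinfle, hxr]
end
end

section
/- Let F ∈ C¹(ℝ^d;ℝ) be (m,b)-dissipative and M-smooth, and let r > 0. If F(x) ≤ r, then ‖∇F(x)‖² ≤ 2‖∇F(0)‖² + (8M²/m)( r + (1/2) b log 2 − inf_{w∈ℝ^d} F(w) ). -/
open MeasureTheory Real
open scoped RealInnerProductSpace NNReal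

noncomputable section

lemma grad_cont {d : ℕ} {F : Ed d → ℝ} (hF : ContDiff ℝ 1 F) : Continuous (gradient F) :=
  (InnerProductSpace.toDual ℝ (Ed d)).symm.continuous.comp (hF.continuous_fderiv one_ne_zero)

lemma hasDerivAt_line {d : ℕ} {F : Ed d → ℝ} (hF : ContDiff ℝ 1 F) (y : Ed d) (t : ℝ) :
    HasDerivAt (fun t : ℝ => F (t • y)) ⟪gradient F (t • y), y⟫ t := by
  have h1 : HasDerivAt (fun t : ℝ => t • y) y t := by
    simpa using (hasDerivAt_id t).smul_const y
  have h2 := ((hF.differentiable one_ne_zero) (t • y)).hasGradientAt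
  have h3 := h2.hasFDerivAt.comp_hasDerivAt t h1
  simpa [InnerProductSpace.toDual_apply_apply, Function.comp_def] using h3

lemma line_integral {d : ℕ} {F : Ed d → ℝ} (hF : ContDiff ℝ 1 F) (y : Ed d) (s u : ℝ) :
    F (u • y) - F (s • y) = ∫ t in s..u, ⟪gradient F (t • y), y⟫ := by
  have hc : Continuous (fun t : ℝ => ⟪gradient F (t • y), y⟫) :=
    Continuous.inner ((grad_cont hF).comp (continuous_id.smul continuous_const)) continuous_const
  exact (intervalIntegral.integral_eq_sub_of_hasDerivAt
    (fun t _ => hasDerivAt_line hF y t) (hc.intervalIntegrable s u)).symm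

lemma key_lemma {d : ℕ} {m b : ℝ} {F : Ed d → ℝ} (hF : ContDiff ℝ 1 F)
    (hdis : ∀ x, m * ‖x‖ ^ 2 - b ≤ ⟪gradient F x, x⟫) (y : Ed d)
    {s : ℝ} (hs0 : 0 < s) (hs1 : s ≤ 1) :
    F (s • y) ≤ F y - m * ‖y‖ ^ 2 * (1 - s ^ 2) / 2 - b * Real.log s := by
  have huIcc : Set.uIcc s 1 = Set.Icc s 1 := Set.uIcc_of_le hs1
  have hc : Continuous (fun t : ℝ => ⟪gradient F (t • y), y⟫) :=
    Continuous.inner ((grad_cont hF).comp (continuous_id.smul continuous_const)) continuous_const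
  have hg : ContinuousOn (fun t : ℝ => m * ‖y‖ ^ 2 * t - b * t⁻¹) (Set.Icc s 1) := by
    apply ContinuousOn.sub (Continuous.continuousOn (by continuity))
    exact ContinuousOn.mul continuousOn_const
      (ContinuousOn.inv₀ continuousOn_id (fun t ht => by dsimp; nlinarith [ht.1]))
  have hgi : IntervalIntegrable (fun t : ℝ => m * ‖y‖ ^ 2 * t - b * t⁻¹) volume s 1 :=
    (hg.mono (le_of_eq huIcc)).intervalIntegrable
  have hmono : ∫ t in s..1, (m * ‖y‖ ^ 2 * t - b * t⁻¹) ≤ ∫ t in s..1, ⟪gradient F (t • y), y⟫ := by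
    apply intervalIntegral.integral_mono_on hs1 hgi (hc.intervalIntegrable s 1)
    intro t ht
    have ht0 : 0 < t := lt_of_lt_of_le hs0 ht.1
    have h1 : m * ‖t • y‖ ^ 2 - b ≤ ⟪gradient F (t • y), t • y⟫ := hdis (t • y)
    rw [real_inner_smul_right] at h1
    have hn : ‖t • y‖ ^ 2 = t ^ 2 * ‖y‖ ^ 2 := by
      rw [norm_smul, mul_pow, Real.norm_eq_abs, sq_abs]
    rw [hn] at h1
    rw [← mul_le_mul_iff_right₀ ht0]
    have hti : t * t⁻¹ = 1 := mul_inv_cancel₀ ht0.ne'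
    have hexp : t * (m * ‖y‖ ^ 2 * t - b * t⁻¹) = m * (t ^ 2 * ‖y‖ ^ 2) - b * (t * t⁻¹) := by
      ring
    rw [hexp, hti, mul_one]
    exact h1
  have hcomp : ∫ t in s..1, (m * ‖y‖ ^ 2 * t - b * t⁻¹)
      = m * ‖y‖ ^ 2 * (1 - s ^ 2) / 2 + b * Real.log s := by
    have h1 : IntervalIntegrable (fun t : ℝ => m * ‖y‖ ^ 2 * t) volume s 1 :=
      (Continuous.intervalIntegrable (by continuity) s 1)
    have h2 : IntervalIntegrable (fun t : ℝ => b * t⁻¹) volume s 1 := by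
      apply ContinuousOn.intervalIntegrable
      rw [huIcc]
      exact ContinuousOn.mul continuousOn_const
        (ContinuousOn.inv₀ continuousOn_id (fun t ht => by dsimp; nlinarith [ht.1]))
    rw [intervalIntegral.integral_sub h1 h2, intervalIntegral.integral_const_mul,
      intervalIntegral.integral_const_mul, integral_id,
      integral_inv_of_pos hs0 one_pos, one_div, Real.log_inv]
    ring
  have hli := line_integral hF y s 1
  simp only [one_smul] at hli
  linarith [hmono, hli, hcomp]

lemma lower_quad {d : ℕ} {M : ℝ} {F : Ed d → ℝ} (hF : ContDiff ℝ 1 F)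
    (hsm : ∀ x y, ‖gradient F x - gradient F y‖ ≤ M * ‖x - y‖) (hM : 0 < M) (z : Ed d) :
    F 0 - ‖gradient F 0‖ * ‖z‖ - M / 2 * ‖z‖ ^ 2 ≤ F z := by
  have hc : Continuous (fun t : ℝ => ⟪gradient F (t • z), z⟫) :=
    Continuous.inner ((grad_cont hF).comp (continuous_id.smul continuous_const)) continuous_const
  have hmono : ∫ t in (0:ℝ)..1, (-(‖gradient F 0‖ * ‖z‖) - M * ‖z‖ ^ 2 * t)
      ≤ ∫ t in (0:ℝ)..1, ⟪gradient F (t • z), z⟫ := by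
    apply intervalIntegral.integral_mono_on zero_le_one
      (Continuous.intervalIntegrable (by continuity) 0 1) (hc.intervalIntegrable 0 1)
    intro t ht
    have hlip : ‖gradient F (t • z) - gradient F 0‖ ≤ M * (t * ‖z‖) := by
      have := hsm (t • z) 0
      simpa [norm_smul, abs_of_nonneg ht.1] using this
    have hnorm : ‖gradient F (t • z)‖ ≤ ‖gradient F 0‖ + M * (t * ‖z‖) := by
      calc ‖gradient F (t • z)‖ ≤ ‖gradient F (t • z) - gradient F 0‖ + ‖gradient F 0‖ := by
            simpa using norm_sub_le (gradient F (t • z) - gradient F 0) (-(gradient F 0))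
        _ ≤ ‖gradient F 0‖ + M * (t * ‖z‖) := by linarith
    have hinner : -(‖gradient F (t • z)‖ * ‖z‖) ≤ ⟪gradient F (t • z), z⟫ := by
      have h := abs_real_inner_le_norm (gradient F (t • z)) z
      linarith [neg_abs_le ⟪gradient F (t • z), z⟫]
    have hz : (0:ℝ) ≤ ‖z‖ := norm_nonneg z
    nlinarith [hnorm, hinner, hz]
  have hli := line_integral hF z 0 1
  simp only [one_smul, zero_smul] at hli
  have hcomp : ∫ t in (0:ℝ)..1, (-(‖gradient F 0‖ * ‖z‖) - M * ‖z‖ ^ 2 * t)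
      = -(‖gradient F 0‖ * ‖z‖) - M * ‖z‖ ^ 2 / 2 := by
    rw [intervalIntegral.integral_sub (intervalIntegrable_const)
      (Continuous.intervalIntegrable (by continuity) 0 1),
      intervalIntegral.integral_const_mul, integral_id]
    simp; ring
  linarith [hmono, hli, hcomp]

lemma bdd_below_range {d : ℕ} {m b M : ℝ} {F : Ed d → ℝ} (hF : ContDiff ℝ 1 F)
    (hm : 0 < m) (hb : 0 < b) (hM : 0 < M)
    (hdis : ∀ x, m * ‖x‖ ^ 2 - b ≤ ⟪gradient F x, x⟫)
    (hsm : ∀ x y, ‖gradient F x - gradient F y‖ ≤ M * ‖x - y‖) :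
    BddBelow (Set.range F) := by
  refine ⟨F 0 - ‖gradient F 0‖ - M / 2 - m / 2 - b ^ 2 / (2 * m), ?_⟩
  rintro _ ⟨y, rfl⟩
  rcases le_or_gt ‖y‖ 1 with hy | hy
  · have h := lower_quad hF hsm hM y
    have h0 : (0:ℝ) ≤ ‖y‖ := norm_nonneg y
    have hb2 : (0:ℝ) < b ^ 2 / (2 * m) := by positivity
    have hy2 : ‖y‖ ^ 2 ≤ 1 := by nlinarith
    linarith [h, mul_le_mul_of_nonneg_left hy (norm_nonneg (gradient F 0)),
      mul_le_mul_of_nonneg_left hy2 (by positivity : (0:ℝ) ≤ M / 2), hm.le]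
  · set s : ℝ := ‖y‖⁻¹ with hs
    have hy0 : (0:ℝ) < ‖y‖ := lt_trans one_pos hy
    have hs0 : 0 < s := inv_pos.mpr hy0
    have hs1 : s ≤ 1 := by rw [hs]; exact inv_le_one_of_one_le₀ hy.le
    have hkey := key_lemma hF hdis y hs0 hs1
    have hns : ‖s • y‖ = 1 := by
      rw [norm_smul, Real.norm_eq_abs, abs_of_pos hs0, hs, inv_mul_cancel₀ hy0.ne']
    have hq := lower_quad hF hsm hM (s • y)
    rw [hns] at hq
    have hlogs : Real.log s = -Real.log ‖y‖ := by rw [hs, Real.log_inv]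
    have hlog_le : Real.log ‖y‖ ≤ ‖y‖ - 1 := Real.log_le_sub_one_of_pos hy0
    have hsq : s ^ 2 = (‖y‖ ^ 2)⁻¹ := by rw [hs, ← inv_pow]
    have hsq2 : ‖y‖ ^ 2 * s ^ 2 = 1 := by
      rw [hsq]; exact mul_inv_cancel₀ (by positivity)
    -- F y ≥ F (s•y) + m‖y‖²(1-s²)/2 + b log s
    -- and m‖y‖²/2 - b‖y‖ ≥ -b²/(2m)
    have hkey' : F (s • y) ≤ F y - m * ‖y‖ ^ 2 / 2 + m / 2 + b * Real.log ‖y‖ := by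
      have hexp : m * ‖y‖ ^ 2 * (1 - s ^ 2) / 2
          = m * ‖y‖ ^ 2 / 2 - m * (‖y‖ ^ 2 * s ^ 2) / 2 := by ring
      rw [hexp, hsq2, hlogs] at hkey
      linarith [hkey]
    have hcs' : 0 ≤ m * ‖y‖ ^ 2 / 2 - b * ‖y‖ + b ^ 2 / (2 * m) := by
      have hbm2 : 2 * m * (b ^ 2 / (2 * m)) = b ^ 2 := by field_simp
      nlinarith [sq_nonneg (m * ‖y‖ - b), hbm2, hm]
    linarith [hkey', hq, hcs', mul_le_mul_of_nonneg_left hlog_le hb.le, hb.le, hy0.le]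


/-- **Gradient bound on sublevel sets** of a dissipative and smooth function. -/
theorem gradient_bound_on_sublevel_set
    (d : ℕ) (m b M : ℝ) (hm : 0 < m) (hb : 0 < b) (hM : 0 < M)
    (F : Ed d → ℝ) (hF : ContDiff ℝ 1 F)
    (hdis : IsDissipative m b F) (hsm : IsGradSmooth M F)
    (r : ℝ) (hr : 0 < r) (x : Ed d) (hx : F x ≤ r) :
    ‖gradient F x‖ ^ 2 ≤ 2 * ‖gradient F 0‖ ^ 2
      + (8 * M ^ 2 / m) * (r + (1 / 2) * b * Real.log 2 - ⨅ w : Ed d, F w) := by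
  have hdis' : ∀ x, m * ‖x‖ ^ 2 - b ≤ ⟪gradient F x, x⟫ := hdis
  have hsm' : ∀ x y, ‖gradient F x - gradient F y‖ ≤ M * ‖x - y‖ := hsm
  have hbdd := bdd_below_range hF hm hb hM hdis' hsm'
  set s : ℝ := (Real.sqrt 2)⁻¹ with hsdef
  have hsqrt2 : (1:ℝ) ≤ Real.sqrt 2 := by
    nlinarith [Real.sq_sqrt (by norm_num : (0:ℝ) ≤ 2), Real.sqrt_nonneg 2]
  have hs0 : (0:ℝ) < s := by positivity
  have hs1 : s ≤ 1 := inv_le_one_of_one_le₀ hsqrt2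
  have hsq : s ^ 2 = 1 / 2 := by
    rw [hsdef, inv_pow, Real.sq_sqrt (by norm_num : (0:ℝ) ≤ 2)]
    norm_num
  have hlog : Real.log s = -(1 / 2 * Real.log 2) := by
    rw [hsdef, Real.log_inv, Real.log_sqrt (by norm_num : (0:ℝ) ≤ 2)]
    ring
  have hkey := key_lemma hF hdis' x hs0 hs1
  rw [hsq, hlog] at hkey
  have hinf : (⨅ w : Ed d, F w) ≤ F (s • x) := ciInf_le hbdd (s • x)
  set A : ℝ := r + (1 / 2) * b * Real.log 2 - ⨅ w : Ed d, F w with hA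
  have hxb : m * ‖x‖ ^ 2 ≤ 4 * A := by rw [hA]; linarith [hkey, hinf, hx]
  have hg : ‖gradient F x‖ ≤ ‖gradient F 0‖ + M * ‖x‖ := by
    have h := hsm' x 0
    simp only [sub_zero] at h
    calc ‖gradient F x‖ ≤ ‖gradient F x - gradient F 0‖ + ‖gradient F 0‖ := by
          simpa using norm_sub_le (gradient F x - gradient F 0) (-(gradient F 0))
      _ ≤ ‖gradient F 0‖ + M * ‖x‖ := by linarith
  have h1 : ‖gradient F x‖ ^ 2 ≤ 2 * ‖gradient F 0‖ ^ 2 + 2 * M ^ 2 * ‖x‖ ^ 2 := by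
    nlinarith [mul_self_le_mul_self (norm_nonneg (gradient F x)) hg,
      sq_nonneg (‖gradient F 0‖ - M * ‖x‖)]
  have h2 : 2 * M ^ 2 * ‖x‖ ^ 2 ≤ 8 * M ^ 2 / m * A := by
    rw [div_mul_eq_mul_div, le_div_iff₀ hm]
    nlinarith [mul_le_mul_of_nonneg_left hxb (by positivity : (0:ℝ) ≤ 2 * M ^ 2)]
  linarith [h1, h2]
end
end
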